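/- Let $X$ be a Banach space with a normalized unconditional basis $(e_\gamma)_{\gamma\in\Gamma}$ with unconditional basis constant $L$. If the sequence $\lambda(n) = \|\sum_{k=1}^n e_{\gamma_k}\|$ is bounded, then for every finite $F\subseteq\Gamma$ and reals $(a_\gamma)_{\gamma\in F}$, $L^{-1}\max_{\gamma\in F}|a_\gamma| \le \|\sum_{\gamma\in F} a_\gamma e_\gamma\| \le L \max_{\gamma\in F}|a_\gamma| \cdot \|\sum_{\gamma\in F} e_\gamma\|$, and hence $X$ is isomorphic to $c_0(\Gamma)$. -/

import Mathlib

open Filter Topology ZeroAtInfty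

/-!
Flipping the signs of all coefficients but one and averaging with the original vector isolates
`a δ • e δ`, so `|a δ| ≤ L ‖∑ a γ • e γ‖`. Conversely, `v + t • u` has convex norm in `t`, so on the
cube `|a γ| ≤ M` the norm of `∑ a γ • e γ` is maximal at a vertex `∑ ± M • e γ`, whose norm is at
most `L M ‖∑ e γ‖ ≤ L M B`. Hence the coordinate map `x ↦ (e*_γ x)_γ` is bounded above and below
on the span of the basis, and by density on `X`. Its values vanish at infinity because they do on
the span, and its range is closed (it is bounded below on a complete space) and contains every
finitely supported function, so it is all of `c₀(Γ)`.
-/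

theorem ZeroAtInftyContinuousMap.norm_le {α β : Type*} [TopologicalSpace α]
    [SeminormedAddCommGroup β] {f : C₀(α, β)} {C : ℝ} (hC : 0 ≤ C) :
    ‖f‖ ≤ C ↔ ∀ x, ‖f x‖ ≤ C := by
  rw [← norm_toBCF_eq_norm, BoundedContinuousFunction.norm_le hC]
  rfl

theorem nonempty_continuousLinearEquiv_of_denseRange {𝕜 E F : Type*}
    [NontriviallyNormedField 𝕜] [NormedAddCommGroup E] [NormedSpace 𝕜 E] [CompleteSpace E]
    [NormedAddCommGroup F] [NormedSpace 𝕜 F] [CompleteSpace F] (T : E →L[𝕜] F) {K : ℝ}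
    (hK : ∀ x, ‖x‖ ≤ K * ‖T x‖) (hT : DenseRange T) : Nonempty (E ≃L[𝕜] F) := by
  have hanti : AntilipschitzWith K.toNNReal T := T.antilipschitz_of_bound fun x =>
    (hK x).trans (by gcongr; exact K.le_coe_toNNReal)
  have hsurj : Function.Surjective T := by
    rw [← Set.range_eq_univ, ← hT.closure_range,
      (hanti.isClosed_range T.uniformContinuous).closure_eq]
  exact ⟨.ofBijective T (LinearMap.ker_eq_bot.mpr hanti.injective)
    (LinearMap.range_eq_top.mpr hsurj)⟩

theorem exists_continuousLinearMap_zeroAtInfty_apply {X Γ : Type*} [NormedAddCommGroup X]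
    [NormedSpace ℝ X] [TopologicalSpace Γ] [DiscreteTopology Γ] (φ : Γ → StrongDual ℝ X) {C : ℝ}
    (hC : 0 ≤ C) (hbound : ∀ x γ, |φ γ x| ≤ C * ‖x‖)
    (htend : ∀ x, Tendsto (fun γ => φ γ x) cofinite (𝓝 0)) :
    ∃ T : X →L[ℝ] C₀(Γ, ℝ), ∀ x γ, T x γ = φ γ x := by
  let T : X →ₗ[ℝ] C₀(Γ, ℝ) :=
    { toFun := fun x => ⟨⟨fun γ => φ γ x, continuous_of_discreteTopology⟩,
        by rw [cocompact_eq_cofinite]; exact htend x⟩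
      map_add' := fun x y => by ext γ; simp
      map_smul' := fun t x => by ext γ; simp }
  exact ⟨T.mkContinuous C fun x =>
    (ZeroAtInftyContinuousMap.norm_le (by positivity)).mpr (hbound x), fun _ _ => rfl⟩

section Unconditional

variable {X : Type*} [NormedAddCommGroup X] [NormedSpace ℝ X] {Γ : Type*}

def IsUnconditional (e : Γ → X) (L : ℝ) : Prop :=
  ∀ (F : Finset Γ) (a sgn : Γ → ℝ), (∀ γ, sgn γ = 1 ∨ sgn γ = -1) →
    ‖∑ γ ∈ F, (sgn γ * a γ) • e γ‖ ≤ L * ‖∑ γ ∈ F, a γ • e γ‖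

theorem abs_le_mul_norm_sum_of_isUnconditional {e : Γ → X} {L : ℝ}
    (hu : IsUnconditional e L) (hL : 1 ≤ L) (hnorm : ∀ γ, ‖e γ‖ = 1) (F : Finset Γ)
    (a : Γ → ℝ) {δ : Γ} (hδ : δ ∈ F) : |a δ| ≤ L * ‖∑ γ ∈ F, a γ • e γ‖ := by
  classical
  set x := ∑ γ ∈ F, a γ • e γ
  let sgn : Γ → ℝ := fun γ => if γ = δ then 1 else -1
  have hsgn : ∀ γ, sgn γ = 1 ∨ sgn γ = -1 := fun γ => by unfold sgn; split_ifs <;> simp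
  have hsum : ∑ γ ∈ F, (sgn γ * a γ) • e γ + x = (2 * a δ) • e δ := by
    rw [← Finset.sum_add_distrib, Finset.sum_eq_single_of_mem δ hδ]
    · simp only [sgn, if_pos rfl]
      module
    · intro γ _ hγ
      simp only [sgn, if_neg hγ]
      module
  have h2 : 2 * |a δ| ≤ L * ‖x‖ + ‖x‖ := by
    calc 2 * |a δ| = ‖∑ γ ∈ F, (sgn γ * a γ) • e γ + x‖ := by
          rw [hsum, norm_smul, hnorm, Real.norm_eq_abs, abs_mul]; norm_num
      _ ≤ L * ‖x‖ + ‖x‖ := (norm_add_le _ _).trans (by gcongr; exact hu F a sgn hsgn)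
  nlinarith [norm_nonneg x]

theorem norm_add_smul_le_max (v u : X) {c M : ℝ} (hc : |c| ≤ M) :
    ‖v + c • u‖ ≤ max ‖v + (-M) • u‖ ‖v + M • u‖ := by
  have hconv : ConvexOn ℝ Set.univ fun t : ℝ => ‖v + t • u‖ :=
    (convexOn_univ_norm.translate_right v).comp_linearMap (LinearMap.toSpanSingleton ℝ X u)
  exact hconv.le_max_of_mem_Icc (f := fun t : ℝ => ‖v + t • u‖) trivial trivial (abs_le.mp hc)

theorem exists_sign_norm_add_sum_le (e : Γ → X) {M : ℝ} {F : Finset Γ} {a : Γ → ℝ}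
    (ha : ∀ γ ∈ F, |a γ| ≤ M) (v : X) :
    ∃ sgn : Γ → ℝ, (∀ γ, sgn γ = 1 ∨ sgn γ = -1) ∧
      ‖v + ∑ γ ∈ F, a γ • e γ‖ ≤ ‖v + ∑ γ ∈ F, (sgn γ * M) • e γ‖ := by
  classical
  induction F using Finset.induction_on generalizing v with
  | empty => exact ⟨fun _ => 1, fun _ => Or.inl rfl, by simp⟩
  | @insert δ F hδ ih =>
    obtain ⟨sgn, hsgn, hle⟩ :=
      ih (fun γ hγ => ha γ (Finset.mem_insert_of_mem hγ)) (v + a δ • e δ)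
    set w := v + ∑ γ ∈ F, (sgn γ * M) • e γ
    obtain ⟨s, hs, hws⟩ : ∃ s : ℝ, (s = 1 ∨ s = -1) ∧
        ‖w + a δ • e δ‖ ≤ ‖w + (s * M) • e δ‖ := by
      have hmax := norm_add_smul_le_max w (e δ) (ha δ (Finset.mem_insert_self δ F))
      rcases le_total ‖w + (-M) • e δ‖ ‖w + M • e δ‖ with h | h
      · exact ⟨1, Or.inl rfl, by rw [one_mul]; exact hmax.trans_eq (max_eq_right h)⟩
      · exact ⟨-1, Or.inr rfl, by rw [neg_one_mul]; exact hmax.trans_eq (max_eq_left h)⟩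
    refine ⟨Function.update sgn δ s, fun γ => ?_, ?_⟩
    · rcases eq_or_ne γ δ with rfl | h
      · simpa using hs
      · simpa [h] using hsgn γ
    · have hF : ∑ γ ∈ F, (Function.update sgn δ s γ * M) • e γ
          = ∑ γ ∈ F, (sgn γ * M) • e γ :=
        Finset.sum_congr rfl fun γ hγ => by
          rw [Function.update_of_ne (ne_of_mem_of_not_mem hγ hδ)]
      rw [Finset.sum_insert hδ, Finset.sum_insert hδ, hF, Function.update_self]
      calc ‖v + (a δ • e δ + ∑ γ ∈ F, a γ • e γ)‖
          = ‖(v + a δ • e δ) + ∑ γ ∈ F, a γ • e γ‖ := by rw [add_assoc]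
        _ ≤ ‖(v + a δ • e δ) + ∑ γ ∈ F, (sgn γ * M) • e γ‖ := hle
        _ = ‖w + a δ • e δ‖ := by rw [add_right_comm]
        _ ≤ ‖w + (s * M) • e δ‖ := hws
        _ = ‖v + ((s * M) • e δ + ∑ γ ∈ F, (sgn γ * M) • e γ)‖ := by
          congr 1; simp only [w]; abel

theorem norm_sum_le_of_isUnconditional {e : Γ → X} {L : ℝ} (hu : IsUnconditional e L)
    {F : Finset Γ} {a : Γ → ℝ} {M : ℝ} (hM : 0 ≤ M) (ha : ∀ γ ∈ F, |a γ| ≤ M) :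
    ‖∑ γ ∈ F, a γ • e γ‖ ≤ L * M * ‖∑ γ ∈ F, e γ‖ := by
  obtain ⟨sgn, hsgn, hle⟩ := exists_sign_norm_add_sum_le e ha 0
  calc ‖∑ γ ∈ F, a γ • e γ‖ ≤ ‖∑ γ ∈ F, (sgn γ * M) • e γ‖ := by simpa using hle
    _ ≤ L * ‖∑ γ ∈ F, M • e γ‖ := hu F (fun _ => M) sgn hsgn
    _ = L * M * ‖∑ γ ∈ F, e γ‖ := by
      rw [← Finset.smul_sum, norm_smul, Real.norm_of_nonneg hM, mul_assoc]

end Unconditional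

section Biorthogonal

variable {X : Type*} [NormedAddCommGroup X] [NormedSpace ℝ X] {Γ : Type*}

theorem denseRange_finset_sum {e : Γ → X}
    (hspan : (Submodule.span ℝ (Set.range e)).topologicalClosure = ⊤) :
    DenseRange fun p : Finset Γ × (Γ → ℝ) => ∑ γ ∈ p.1, p.2 γ • e γ := by
  refine (Submodule.dense_iff_topologicalClosure_eq_top.mpr hspan).mono ?_
  intro x hx
  obtain ⟨c, rfl⟩ := Finsupp.mem_span_range_iff_exists_finsupp.mp hx
  exact ⟨(c.support, c), rfl⟩

variable [DecidableEq Γ] {e : Γ → X} {estar : Γ → StrongDual ℝ X}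

theorem apply_finset_sum_of_biorthogonal
    (hbio : ∀ γ δ, estar γ (e δ) = if γ = δ then (1 : ℝ) else 0)
    (F : Finset Γ) (a : Γ → ℝ) (γ : Γ) :
    estar γ (∑ δ ∈ F, a δ • e δ) = if γ ∈ F then a γ else 0 := by
  simp [map_sum, hbio]

theorem abs_apply_le_of_isUnconditional
    (hbio : ∀ γ δ, estar γ (e δ) = if γ = δ then (1 : ℝ) else 0)
    (hspan : (Submodule.span ℝ (Set.range e)).topologicalClosure = ⊤)
    (hnorm : ∀ γ, ‖e γ‖ = 1) {L : ℝ} (hu : IsUnconditional e L) (hL : 1 ≤ L)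
    (x : X) (γ : Γ) : |estar γ x| ≤ L * ‖x‖ := by
  induction x using (denseRange_finset_sum hspan).induction_on with
  | hp => exact isClosed_le (estar γ).continuous.abs (continuous_const.mul continuous_norm)
  | ih p =>
    rw [apply_finset_sum_of_biorthogonal hbio]
    split_ifs with hγ
    · exact abs_le_mul_norm_sum_of_isUnconditional hu hL hnorm p.1 p.2 hγ
    · rw [abs_zero]
      positivity

theorem tendsto_apply_cofinite_zero
    (hbio : ∀ γ δ, estar γ (e δ) = if γ = δ then (1 : ℝ) else 0)
    (hspan : (Submodule.span ℝ (Set.range e)).topologicalClosure = ⊤)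
    {C : ℝ} (hC : 0 < C) (hbound : ∀ x γ, |estar γ x| ≤ C * ‖x‖) (x : X) :
    Tendsto (fun γ => estar γ x) cofinite (𝓝 0) := by
  rw [Metric.tendsto_nhds]
  intro ε hε
  obtain ⟨⟨F, a⟩, hxy⟩ := (denseRange_finset_sum hspan).exists_dist_lt x (div_pos hε hC)
  filter_upwards [F.eventually_cofinite_notMem] with γ hγ
  rw [Real.dist_eq, sub_zero]
  calc |estar γ x| = |estar γ (x - ∑ δ ∈ F, a δ • e δ)| := by
        rw [map_sub, apply_finset_sum_of_biorthogonal hbio, if_neg hγ, sub_zero]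
    _ ≤ C * ‖x - ∑ δ ∈ F, a δ • e δ‖ := hbound _ _
    _ < C * (ε / C) := by gcongr; rwa [← dist_eq_norm]
    _ = ε := mul_div_cancel₀ ε hC.ne'

variable [TopologicalSpace Γ]

theorem norm_le_mul_norm_of_isUnconditional
    (hbio : ∀ γ δ, estar γ (e δ) = if γ = δ then (1 : ℝ) else 0)
    (hspan : (Submodule.span ℝ (Set.range e)).topologicalClosure = ⊤)
    {L : ℝ} (hu : IsUnconditional e L) (hL : 0 ≤ L) {B : ℝ}
    (hB : ∀ F : Finset Γ, ‖∑ γ ∈ F, e γ‖ ≤ B)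
    (T : X →L[ℝ] C₀(Γ, ℝ)) (hT : ∀ x γ, T x γ = estar γ x) (x : X) :
    ‖x‖ ≤ L * B * ‖T x‖ := by
  induction x using (denseRange_finset_sum hspan).induction_on with
  | hp => exact isClosed_le continuous_norm (continuous_const.mul T.continuous.norm)
  | ih p =>
    set y := ∑ γ ∈ p.1, p.2 γ • e γ
    have hcoef : ∀ γ ∈ p.1, |p.2 γ| ≤ ‖T y‖ := fun γ hγ => by
      have hTy : T y γ = p.2 γ := by
        rw [hT, apply_finset_sum_of_biorthogonal hbio, if_pos hγ]
      rw [← hTy, ← Real.norm_eq_abs]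
      exact ((ZeroAtInftyContinuousMap.norm_le (norm_nonneg _)).mp le_rfl) γ
    calc ‖y‖ ≤ L * ‖T y‖ * ‖∑ γ ∈ p.1, e γ‖ :=
          norm_sum_le_of_isUnconditional hu (norm_nonneg _) hcoef
      _ ≤ L * ‖T y‖ * B := by gcongr; exact hB p.1
      _ = L * B * ‖T y‖ := by ring

theorem denseRange_of_biorthogonal [DiscreteTopology Γ]
    (hbio : ∀ γ δ, estar γ (e δ) = if γ = δ then (1 : ℝ) else 0)
    (T : X →L[ℝ] C₀(Γ, ℝ)) (hT : ∀ x γ, T x γ = estar γ x) : DenseRange T := by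
  rw [Metric.denseRange_iff]
  intro f r hr
  have hf : ∀ᶠ γ in cofinite, |f γ| < r / 2 := by
    have := f.zero_at_infty'
    rw [cocompact_eq_cofinite, Metric.tendsto_nhds] at this
    simpa using this (r / 2) (half_pos hr)
  set F := (eventually_cofinite.mp hf).toFinset
  refine ⟨∑ γ ∈ F, f γ • e γ, (dist_eq_norm _ _).trans_lt ?_⟩
  refine ((ZeroAtInftyContinuousMap.norm_le (half_pos hr).le).mpr fun γ => ?_).trans_lt
    (half_lt_self hr)
  rw [ZeroAtInftyContinuousMap.sub_apply, hT, apply_finset_sum_of_biorthogonal hbio]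
  split_ifs with hγ
  · simpa using (half_pos hr).le
  · have hfγ : |f γ| < r / 2 := by simpa [F] using hγ
    simpa using hfγ.le

end Biorthogonal

/-- For a normalized unconditional basis `(e γ)` with unconditional constant `L`, if the
norms `‖∑_{γ ∈ F} e γ‖` are uniformly bounded over finite `F` (i.e. `λ(n)` is bounded),
then for all finite `F` and reals `(a γ)`,
`L⁻¹ max |a γ| ≤ ‖∑ a γ e γ‖ ≤ L (max |a γ|) ‖∑_{γ∈F} e γ‖`, and `X` is isomorphic to
`c₀(Γ)`. -/
theorem isomorphic_c0_of_lambda_bounded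
    {X : Type*} [NormedAddCommGroup X] [NormedSpace ℝ X] [CompleteSpace X]
    {Γ : Type*} [TopologicalSpace Γ] [DiscreteTopology Γ] [DecidableEq Γ]
    (e : Γ → X) (estar : Γ → StrongDual ℝ X)
    (hbio : ∀ γ δ, estar γ (e δ) = if γ = δ then (1 : ℝ) else 0)
    (hspanX : (Submodule.span ℝ (Set.range e)).topologicalClosure = ⊤)
    (hnorme : ∀ γ, ‖e γ‖ = 1)
    (L : ℝ) (hL : 1 ≤ L)
    (huncond : ∀ (F : Finset Γ) (a sgn : Γ → ℝ), (∀ γ, sgn γ = 1 ∨ sgn γ = -1) →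
      ‖∑ γ ∈ F, (sgn γ * a γ) • e γ‖ ≤ L * ‖∑ γ ∈ F, a γ • e γ‖)
    (hblam : ∃ B : ℝ, ∀ F : Finset Γ, ‖∑ γ ∈ F, e γ‖ ≤ B) :
    (∀ (F : Finset Γ) (a : Γ → ℝ) (hF : F.Nonempty),
      L⁻¹ * F.sup' hF (fun γ => |a γ|) ≤ ‖∑ γ ∈ F, a γ • e γ‖ ∧
      ‖∑ γ ∈ F, a γ • e γ‖ ≤ L * F.sup' hF (fun γ => |a γ|) * ‖∑ γ ∈ F, e γ‖) ∧
    Nonempty (X ≃L[ℝ] C₀(Γ, ℝ)) := by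
  obtain ⟨B, hB⟩ := hblam
  have hL0 : 0 < L := one_pos.trans_le hL
  have hcoord := abs_apply_le_of_isUnconditional hbio hspanX hnorme huncond hL
  obtain ⟨T, hT⟩ := exists_continuousLinearMap_zeroAtInfty_apply estar hL0.le hcoord
    (tendsto_apply_cofinite_zero hbio hspanX hL0 hcoord)
  refine ⟨fun F a hF => ⟨?_, ?_⟩, nonempty_continuousLinearEquiv_of_denseRange T
    (norm_le_mul_norm_of_isUnconditional hbio hspanX huncond hL0.le hB T hT)
    (denseRange_of_biorthogonal hbio T hT)⟩
  · rw [inv_mul_le_iff₀ hL0]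
    exact Finset.sup'_le hF _ fun γ hγ =>
      abs_le_mul_norm_sum_of_isUnconditional huncond hL hnorme F a hγ
  · have hle : ∀ δ ∈ F, |a δ| ≤ F.sup' hF (fun γ => |a γ|) :=
      fun δ hδ => Finset.le_sup' (fun γ => |a γ|) hδ
    exact norm_sum_le_of_isUnconditional huncond
      ((abs_nonneg _).trans (hle _ hF.choose_spec)) hle
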